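/- arXiv:1504.01216 — 2 statements merged into one kernel-verified Lean document; each statement's English description precedes it below -/
import Mathlib

section
/- For the Leibniz algebra RNF_n (n ≥ 2), the values tr(ad x)·tr(ad y)/tr((ad x)∘(ad y)) are independent of x, y (whenever the denominator is nonzero) and equal 3n(n+1)/(2(2n+1)). -/
/-- Coordinate of `u` at a natural-number index, zero out of range. -/
def cf {m : ℕ} (u : Fin m → ℂ) (j : ℕ) : ℂ := if h : j < m then u ⟨j, h⟩ else 0

/-- The `j`-th coordinate vector of `Fin m → ℂ` (0-based). -/
def ev (m j : ℕ) : Fin m → ℂ := fun k => if (k : ℕ) = j then 1 else 0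

/-- The bracket of `RNF_n` on the basis `e_1, …, e_n, x`:
`[e_i,e_1] = e_{i+1}` (`1 ≤ i ≤ n-1`), `[x,e_1] = -e_1`, `[e_i,x] = i·e_i`
(`1 ≤ i ≤ n`), other products zero. -/
def rnfBr (n : ℕ) (u v : Fin (n + 1) → ℂ) : Fin (n + 1) → ℂ := fun k =>
  if (k : ℕ) = 0 then -(cf u n) * cf v 0 + cf u 0 * cf v n
  else if (k : ℕ) < n then
    cf u ((k : ℕ) - 1) * cf v 0 + (((k : ℕ) : ℂ) + 1) * cf u (k : ℕ) * cf v n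
  else 0

/-- The matrix of the operator `ad z : w ↦ [w, z]` of `RNF_n` in the basis
`e_1, …, e_n, x`. -/
def adM (n : ℕ) (z : Fin (n + 1) → ℂ) : Matrix (Fin (n + 1)) (Fin (n + 1)) ℂ :=
  Matrix.of fun i j => rnfBr n (ev (n + 1) (j : ℕ)) z i

/-! Write `z = a e_1 + ⋯ + b x`. Only `e_1` and `x` act from the right, so
`ad z = a · ad e_1 + b · ad x`, where `ad x = diag(1, …, n, 0)` and `ad e_1` has zero diagonal
and `tr((ad e_1)²) = 0`. Hence `tr(ad z) = b · n(n+1)/2` and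
`tr(ad z ∘ ad z') = b b' · n(n+1)(2n+1)/6`, whose ratio is `3n(n+1)/(2(2n+1))`. -/

open Matrix Finset

section TraceOfDiagonalPlusShift

variable {ι R : Type*} [Fintype ι] [DecidableEq ι] [CommSemiring R]
  {S : Matrix ι ι R} (d : ι → R)

lemma trace_mul_diagonal_of_diag_eq_zero (hS : ∀ i, S i i = 0) :
    (S * diagonal d).trace = 0 := by
  simp [trace, mul_diagonal, hS]

lemma trace_smul_add_smul_diagonal (hS : ∀ i, S i i = 0) (a b : R) :
    (a • S + b • diagonal d).trace = b * ∑ i, d i := by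
  simp [trace, hS, diagonal_apply_eq, mul_sum]

lemma trace_mul_smul_add_smul_diagonal (hS : ∀ i, S i i = 0) (hSS : (S * S).trace = 0)
    (a b a' b' : R) :
    ((a • S + b • diagonal d) * (a' • S + b' • diagonal d)).trace
      = b * b' * ∑ i, d i ^ 2 := by
  have hSD := trace_mul_diagonal_of_diag_eq_zero d hS
  have hDS : (diagonal d * S).trace = 0 := by rw [trace_mul_comm, hSD]
  simp only [add_mul, mul_add, smul_mul_smul_comm, trace_add, trace_smul, hSS, hSD, hDS,
    diagonal_mul_diagonal, trace_diagonal, smul_eq_mul]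
  simp [mul_sum, sq]

end TraceOfDiagonalPlusShift

lemma sum_range_add_one_mul_two {R : Type*} [CommSemiring R] (n : ℕ) :
    (∑ i ∈ range n, ((i : R) + 1)) * 2 = (n : R) * (n + 1) := by
  induction n with
  | zero => simp
  | succ m ih => rw [sum_range_succ, add_mul, ih]; push_cast; ring

lemma sum_range_add_one_sq_mul_six {R : Type*} [CommSemiring R] (n : ℕ) :
    (∑ i ∈ range n, ((i : R) + 1) ^ 2) * 6 = (n : R) * (n + 1) * (2 * n + 1) := by
  induction n with
  | zero => simp
  | succ m ih => rw [sum_range_succ, add_mul, ih]; push_cast; ring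

lemma sum_fin_succ_ite_lt {R : Type*} [AddCommMonoid R] (n : ℕ) (g : ℕ → R) :
    ∑ i : Fin (n + 1), (if (i : ℕ) < n then g i else 0) = ∑ i ∈ range n, g i := by
  simp [Fin.sum_univ_castSucc, Fin.sum_univ_eq_sum_range]

/-- `ad e_1` in the basis `e_1, …, e_n, x`: `e_i ↦ e_{i+1}`, `e_n ↦ 0`, `x ↦ -e_1`. -/
def rnfShift (n : ℕ) : Matrix (Fin (n + 1)) (Fin (n + 1)) ℂ :=
  Matrix.of fun i j =>
    if (i : ℕ) = 0 ∧ (j : ℕ) = n then -1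
    else if (i : ℕ) = (j : ℕ) + 1 ∧ (i : ℕ) < n then 1 else 0

def rnfWeight (n : ℕ) (i : Fin (n + 1)) : ℂ := if (i : ℕ) < n then (i : ℂ) + 1 else 0

lemma rnfShift_diag (n : ℕ) (hn : 1 ≤ n) (i : Fin (n + 1)) : rnfShift n i i = 0 := by
  simp only [rnfShift, of_apply]
  split_ifs <;> first | rfl | omega

lemma trace_rnfShift_mul_self (n : ℕ) (hn : 1 ≤ n) : (rnfShift n * rnfShift n).trace = 0 := by
  simp only [trace, diag_apply, mul_apply]
  refine sum_eq_zero fun i _ => sum_eq_zero fun j _ => ?_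
  simp only [rnfShift, of_apply]
  split_ifs <;> first | omega | simp

lemma cf_ev {m k : ℕ} (j : ℕ) (hk : k < m) : cf (ev m j) k = if k = j then 1 else 0 := by
  simp [cf, ev, hk]

lemma adM_eq (n : ℕ) (hn : 1 ≤ n) (z : Fin (n + 1) → ℂ) :
    adM n z = cf z 0 • rnfShift n + cf z n • diagonal (rnfWeight n) := by
  ext i j
  simp only [adM, rnfBr, rnfShift, rnfWeight, of_apply, Matrix.add_apply, Matrix.smul_apply,
    diagonal_apply, Fin.ext_iff, smul_eq_mul]
  rw [cf_ev _ (by omega), cf_ev _ (by omega), cf_ev _ (by omega : (i : ℕ) - 1 < n + 1),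
    cf_ev _ i.isLt]
  split_ifs <;> first | (exfalso; omega) | ring1 |
    (simp only [show (i : ℕ) = 0 by omega]; ring1)

lemma sum_rnfWeight (n : ℕ) : ∑ i, rnfWeight n i = n * (n + 1) / 2 := by
  rw [eq_div_iff two_ne_zero, ← sum_range_add_one_mul_two]
  exact congrArg (· * 2) (sum_fin_succ_ite_lt n fun k => (k : ℂ) + 1)

lemma sum_rnfWeight_sq (n : ℕ) :
    ∑ i, rnfWeight n i ^ 2 = n * (n + 1) * (2 * n + 1) / 6 := by
  rw [eq_div_iff (by norm_num), ← sum_range_add_one_sq_mul_six]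
  simp only [rnfWeight, ite_pow, zero_pow two_ne_zero]
  exact congrArg (· * 6) (sum_fin_succ_ite_lt n fun k => ((k : ℂ) + 1) ^ 2)

lemma trace_adM (n : ℕ) (hn : 1 ≤ n) (z : Fin (n + 1) → ℂ) :
    (adM n z).trace = cf z n * (n * (n + 1) / 2) := by
  rw [adM_eq n hn, trace_smul_add_smul_diagonal _ (rnfShift_diag n hn), sum_rnfWeight]

lemma trace_adM_mul_adM (n : ℕ) (hn : 1 ≤ n) (x y : Fin (n + 1) → ℂ) :
    (adM n x * adM n y).trace = cf x n * cf y n * (n * (n + 1) * (2 * n + 1) / 6) := by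
  rw [adM_eq n hn, adM_eq n hn, trace_mul_smul_add_smul_diagonal _ (rnfShift_diag n hn)
    (trace_rnfShift_mul_self n hn), sum_rnfWeight_sq]

theorem rnf_one_one_invariant_general (n : ℕ) (hn : 2 ≤ n) (x y : Fin (n + 1) → ℂ) :
    Matrix.trace (adM n x) * Matrix.trace (adM n y) =
      (3 * (n : ℂ) * ((n : ℂ) + 1)) / (2 * (2 * (n : ℂ) + 1)) *
        Matrix.trace (adM n x * adM n y) := by
  have hn' : 1 ≤ n := by omega
  have h2n : 2 * (n : ℂ) + 1 ≠ 0 := by norm_cast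
  rw [trace_adM n hn', trace_adM n hn', trace_adM_mul_adM n hn', div_mul_eq_mul_div,
    eq_div_iff (mul_ne_zero two_ne_zero h2n)]
  ring

/-- For `RNF_n` (`n ≥ 2`) the quantity `tr(ad x)·tr(ad y)/tr(ad x ∘ ad y)` is
independent of `x, y` (whenever the denominator is nonzero) and equals
`3n(n+1)/(2(2n+1))`. -/
theorem rnf_one_one_invariant (n : ℕ) (hn : 2 ≤ n) (x y : Fin (n + 1) → ℂ)
    (hden : Matrix.trace (adM n x * adM n y) ≠ 0) :
    Matrix.trace (adM n x) * Matrix.trace (adM n y) =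
      (3 * (n : ℂ) * ((n : ℂ) + 1)) / (2 * (2 * (n : ℂ) + 1)) *
        Matrix.trace (adM n x * adM n y) :=
  rnf_one_one_invariant_general n hn x y
end

section
/- There exists a degeneration RNF_n → R_2(1): with g_t(x) = x, g_t(e_1) = t^{-1}e_1, g_t(e_i) = t^{-i+2}e_i for 2 ≤ i ≤ n, the transported brackets [a,b]_t = g_t[g_t^{-1}(a), g_t^{-1}(b)] converge as t → 0 to the bracket of R_2(1). -/
/-- The bracket of `R_2(1)` on the basis `e_1, …, e_n, x`:
`[e_i,e_1] = e_{i+1}` (`2 ≤ i ≤ n-1`), `[x,e_1] = -e_1`, `[e_1,x] = e_1`,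
`[e_i,x] = i·e_i` (`2 ≤ i ≤ n`), other products zero. -/
def r2br1 (n : ℕ) (u v : Fin (n + 1) → ℂ) : Fin (n + 1) → ℂ := fun k =>
  if (k : ℕ) = 0 then -(cf u n) * cf v 0 + cf u 0 * cf v n
  else if (k : ℕ) < n then
    (if 2 ≤ (k : ℕ) then cf u ((k : ℕ) - 1) * cf v 0 else 0)
    + (((k : ℕ) : ℂ) + 1) * cf u (k : ℕ) * cf v n
  else 0

/-- The diagonal coefficients of `g_t`: `g_t(x) = x`, `g_t(e_1) = t⁻¹ e_1`,
`g_t(e_i) = t^{-i+2} e_i` for `2 ≤ i ≤ n` (0-based index `j` corresponds to `e_{j+1}`). -/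
noncomputable def d16 (n : ℕ) (t : ℂ) (j : ℕ) : ℂ :=
  if j = n then 1 else if j = 0 then t⁻¹ else t ^ ((1 : ℤ) - (j : ℤ))


lemma cf_smul {m : ℕ} (c : ℕ → ℂ) (u : Fin m → ℂ) (j : ℕ) :
    cf (fun k' : Fin m => c (k' : ℕ) * u k') j = c j * cf u j := by
  unfold cf; split <;> simp

lemma main_eq (n : ℕ) (u v : Fin (n + 1) → ℂ) (t : ℂ) (ht : t ≠ 0) (k : Fin (n + 1)) :
    r2br1 n u v k + (if (k : ℕ) = 1 ∧ 1 < n then t ^ 2 * (cf u 0 * cf v 0) else 0)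
    = d16 n t (k : ℕ) *
        rnfBr n (fun k' => (d16 n t (k' : ℕ))⁻¹ * u k')
          (fun k' => (d16 n t (k' : ℕ))⁻¹ * v k') k := by
  simp only [rnfBr, r2br1, cf_smul (fun j => (d16 n t j)⁻¹)]
  by_cases hk0 : (k : ℕ) = 0
  · simp only [hk0, if_true, if_neg (by omega : ¬((0:ℕ) = 1 ∧ 1 < n)), add_zero]
    have hdn : d16 n t n = 1 := by simp [d16]
    by_cases hn : n = 0
    · subst hn
      simp [d16]
    · have hd0 : d16 n t 0 = t⁻¹ := by simp [d16, hn, Ne.symm hn]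
      rw [hdn, hd0]
      field_simp
  · by_cases hkn : (k : ℕ) < n
    · have hn2 : 1 ≤ n := by omega
      have hd0 : d16 n t 0 = t⁻¹ := by
        have : ¬ (0 = n) := by omega
        simp [d16, this]
      have hdn : d16 n t n = 1 := by simp [d16]
      have hdk : d16 n t (k : ℕ) = t ^ ((1 : ℤ) - ((k : ℕ) : ℤ)) := by
        have h1 : ¬ ((k : ℕ) = n) := by omega
        simp [d16, h1, hk0]
      simp only [if_neg hk0, if_pos hkn, hd0, hdn, hdk, inv_inv, inv_one, one_mul]
      by_cases hk1 : (k : ℕ) = 1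
      · have h1n : 1 < n := by omega
        simp only [hk1, show (1:ℕ) - 1 = 0 from rfl, hd0, inv_inv,
          if_pos (⟨rfl, h1n⟩ : (1:ℕ) = 1 ∧ 1 < n), if_neg (by omega : ¬ (2 ≤ 1))]
        norm_num [h1n]
        ring
      · -- 2 ≤ k < n
        have hk2 : 2 ≤ (k : ℕ) := by omega
        simp only [if_neg (by simp [hk1] : ¬((k:ℕ) = 1 ∧ 1 < n)), if_pos hk2, add_zero]
        have hdk1 : d16 n t ((k : ℕ) - 1) = t ^ ((2 : ℤ) - ((k : ℕ) : ℤ)) := by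
          have h1 : ¬ ((k : ℕ) - 1 = n) := by omega
          have h2 : ¬ ((k : ℕ) - 1 = 0) := by omega
          have h3 : (1 : ℤ) - (((k : ℕ) - 1 : ℕ) : ℤ) = 2 - ((k : ℕ) : ℤ) := by omega
          simp [d16, h1, h2, h3]
        rw [hdk1]
        have e1 : t ^ ((1 : ℤ) - ((k : ℕ) : ℤ)) = t * t ^ (-((k : ℕ) : ℤ)) := by
          rw [sub_eq_add_neg, zpow_add₀ ht, zpow_one]
        have e2 : t ^ ((2 : ℤ) - ((k : ℕ) : ℤ)) = t * t * t ^ (-((k : ℕ) : ℤ)) := by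
          rw [show (2 : ℤ) - ((k : ℕ) : ℤ) = 1 + (1 + -((k : ℕ) : ℤ)) by ring,
            zpow_add₀ ht, zpow_add₀ ht, zpow_one, ← mul_assoc]
        rw [e1, e2]
        have hs : t ^ (-((k : ℕ) : ℤ)) ≠ 0 := zpow_ne_zero _ ht
        generalize t ^ (-((k : ℕ) : ℤ)) = s at hs ⊢
        field_simp
    · simp only [if_neg hk0, if_neg hkn, mul_zero,
        if_neg (by omega : ¬((k:ℕ) = 1 ∧ 1 < n)), add_zero]

/-- Degeneration `RNF_n → R_2(1)`: the transported brackets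
`[u,v]_t = g_t [g_t⁻¹ u, g_t⁻¹ v]` converge, as `t → 0` (`t ≠ 0`), to the bracket of
`R_2(1)`. -/
theorem rnf_degenerates_to_r2_one (n : ℕ) (u v : Fin (n + 1) → ℂ) :
    Filter.Tendsto
      (fun t : ℂ => fun k : Fin (n + 1) =>
        d16 n t (k : ℕ) *
          rnfBr n (fun k' => (d16 n t (k' : ℕ))⁻¹ * u k')
            (fun k' => (d16 n t (k' : ℕ))⁻¹ * v k') k)
      (nhdsWithin 0 {t : ℂ | t ≠ 0}) (nhds (r2br1 n u v)) := by
  rw [tendsto_pi_nhds]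
  intro k
  have hcong :
      (fun t : ℂ => r2br1 n u v k +
        (if (k : ℕ) = 1 ∧ 1 < n then t ^ 2 * (cf u 0 * cf v 0) else 0))
      =ᶠ[nhdsWithin 0 {t : ℂ | t ≠ 0}]
      (fun t : ℂ => d16 n t (k : ℕ) *
          rnfBr n (fun k' => (d16 n t (k' : ℕ))⁻¹ * u k')
            (fun k' => (d16 n t (k' : ℕ))⁻¹ * v k') k) :=
    Filter.eventuallyEq_of_mem self_mem_nhdsWithin
      (fun t ht => main_eq n u v t ht k)
  refine Filter.Tendsto.congr' hcong ?_
  by_cases h : (k : ℕ) = 1 ∧ 1 < n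
  · simp only [if_pos h]
    have h1 : Filter.Tendsto (fun t : ℂ => t ^ 2 * (cf u 0 * cf v 0))
        (nhdsWithin 0 {t : ℂ | t ≠ 0}) (nhds 0) := by
      have hc : Continuous (fun t : ℂ => t ^ 2 * (cf u 0 * cf v 0)) := by continuity
      have := hc.tendsto 0
      simp only [zero_pow, ne_eq, OfNat.ofNat_ne_zero, not_false_eq_true, zero_mul] at this
      exact this.mono_left nhdsWithin_le_nhds
    have := tendsto_const_nhds.add h1
      (f := fun _ : ℂ => r2br1 n u v k) (x := nhdsWithin 0 {t : ℂ | t ≠ 0})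
    simpa using this
  · simp only [if_neg h, add_zero]
    exact tendsto_const_nhds
end
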